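/- arXiv:1502.00719 — 3 statements merged into one kernel-verified Lean document; each statement's English description precedes it below -/
import Mathlib

section
/- For 0 < α < 1, the function σ(α) = 2^(α+1) − 3^α − 1 satisfies 0 < σ(α) < 0.1 on the open interval (0,1). -/
private lemma log3_gt : (1.0986:ℝ) < Real.log 3 := by
  rw [show (1.0986:ℝ) = 0.5493 + 0.5493 by norm_num, ← Real.exp_lt_exp,
    Real.exp_log (by norm_num), Real.exp_add]
  have h := Real.exp_bound' (x := 0.5493) (by norm_num) (by norm_num) (n := 8) (by norm_num)
  have h2 : Real.exp 0.5493 ≤ 1.73204018 := by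
    refine h.trans ?_
    norm_num [Finset.sum_range_succ, Nat.factorial]
  nlinarith [Real.exp_pos (0.5493:ℝ)]

theorem stmt_0 (α : ℝ) (h0 : 0 < α) (h1 : α < 1) :
    0 < (2:ℝ) ^ (α + 1) - 3 ^ α - 1 ∧ (2:ℝ) ^ (α + 1) - 3 ^ α - 1 < 0.1 := by
  have h2e : (2:ℝ) ^ (α + 1) = (2:ℝ) ^ α * 2 := Real.rpow_add_one two_ne_zero α
  constructor
  · -- strict concavity of x ↦ x^α
    have sc := Real.strictConcaveOn_rpow h0 h1
    have m1 : (1:ℝ) ∈ Set.Ici (0:ℝ) := by norm_num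
    have m3 : (3:ℝ) ∈ Set.Ici (0:ℝ) := by norm_num
    have key := sc.2 m1 m3 (by norm_num) (by norm_num : (0:ℝ) < 1/2)
      (by norm_num : (0:ℝ) < 1/2) (by norm_num : (1:ℝ)/2 + 1/2 = 1)
    simp only [smul_eq_mul, Real.one_rpow] at key
    have h2 : ((1:ℝ)/2 * 1 + 1/2 * 3) = 2 := by norm_num
    rw [h2] at key
    nlinarith [key]
  · -- upper bound via exp Taylor estimates
    have h2exp : (2:ℝ) ^ α = Real.exp (Real.log 2 * α) := by
      rw [Real.rpow_def_of_pos (by norm_num)]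
    have h3exp : (3:ℝ) ^ α = Real.exp (Real.log 3 * α) := by
      rw [Real.rpow_def_of_pos (by norm_num)]
    have hc : Real.log 2 * α ≤ 0.69314719 * α := by
      nlinarith [Real.log_two_lt_d9, h0]
    have hd : 1.0986 * α ≤ Real.log 3 * α := by
      nlinarith [log3_gt, h0]
    have hx0 : (0:ℝ) ≤ 0.69314719 * α := by nlinarith
    have hx1 : (0.69314719:ℝ) * α ≤ 1 := by nlinarith
    have hU0 := Real.exp_bound' hx0 hx1 (n := 6) (by norm_num)
    have hU : Real.exp (Real.log 2 * α) ≤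
        1 + 0.69314719*α + (0.69314719*α)^2/2 + (0.69314719*α)^3/6
          + (0.69314719*α)^4/24 + (0.69314719*α)^5/120 + (0.69314719*α)^6*7/4320 := by
      refine (Real.exp_le_exp.mpr hc).trans (hU0.trans ?_)
      norm_num [Finset.sum_range_succ, Nat.factorial]
    have hL0 := Real.sum_le_exp_of_nonneg (x := 1.0986*α) (by nlinarith) 7
    have hL : 1 + 1.0986*α + (1.0986*α)^2/2 + (1.0986*α)^3/6 + (1.0986*α)^4/24
        + (1.0986*α)^5/120 + (1.0986*α)^6/720 ≤ Real.exp (Real.log 3 * α) := by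
      refine le_trans ?_ ((Real.exp_le_exp.mpr hd).trans_eq' rfl)
      refine le_trans (le_of_eq ?_) hL0
      norm_num [Finset.sum_range_succ, Nat.factorial]
    rw [h2e, h2exp, h3exp]
    nlinarith [hU, hL, sq_nonneg (α-0.574), sq_nonneg (α*(α-0.574)),
      sq_nonneg (α*α-0.574), mul_pos h0 h0, sq_nonneg α, mul_pos (mul_pos h0 h0) h0]
end

section
/- For 0 < α < 1, the sequence Σ_{k=1}^{n} k^{1−α} − n^{2−α}/(2−α) − n^{1−α}/2 converges as n → ∞ to ζ(α−1), the value of the Riemann zeta function at α−1. -/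
open Complex Finset Filter Topology

noncomputable def zA (s : ℂ) (k : ℕ) : ℂ :=
  ((k:ℂ)^(-s) + ((k:ℂ)+1)^(-s))/2 - (((k:ℂ)+1)^(1-s) - (k:ℂ)^(1-s))/(1-s)
noncomputable def zT (s : ℂ) : ℂ := ∑' k : ℕ, zA s (k+1)
noncomputable def zG (s : ℂ) : ℂ := zT s + 1/2 + 1/(s-1)
noncomputable def zS (s : ℂ) (n : ℕ) : ℂ :=
  (∑ k ∈ Finset.Icc 1 n, (k:ℂ)^(-s)) - (n:ℂ)^(1-s)/(1-s) - (n:ℂ)^(-s)/2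


lemma key_id (s : ℂ) (n : ℕ) :
    (∑ k ∈ Finset.Icc 1 (n+1), (k:ℂ)^(-s)) =
      (∑ k ∈ Finset.range n, zA s (k+1)) + 1/2 + ((n:ℂ)+1)^(-s)/2
        + ((n:ℂ)+1)^(1-s)/(1-s) - 1/(1-s) := by
  induction n with
  | zero => simp [zA, one_cpow]; norm_num
  | succ n ih =>
      rw [Finset.sum_Icc_succ_top (by omega : 1 ≤ n+1+1), ih, Finset.sum_range_succ]
      push_cast
      simp only [zA]
      push_cast
      ring


lemma dcpow (K : ℝ) (hK : 0 < K) (w : ℂ) (t : ℝ) (ht : 0 ≤ t) :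
    HasDerivAt (fun u : ℝ => ((K + u : ℝ) : ℂ) ^ w) (w * ((K + t : ℝ) : ℂ) ^ (w-1)) t := by
  have hpos : 0 < K + t := by linarith
  have hmem : ((K:ℂ) + (t:ℝ)) ∈ Complex.slitPlane := by
    rw [show ((K:ℂ) + (t:ℝ)) = (((K + t : ℝ)) : ℂ) by push_cast; ring]
    exact ofReal_mem_slitPlane.2 hpos
  have h1 : HasDerivAt (fun z : ℂ => ((K:ℂ) + z) ^ w) (w * ((K:ℂ) + (t:ℝ)) ^ (w-1) * 1) ((t:ℝ):ℂ) :=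
    HasDerivAt.cpow_const ((hasDerivAt_id ((t:ℝ):ℂ)).const_add (K:ℂ)) hmem
  have h2 := h1.comp_ofReal
  have hfeq : (fun u : ℝ => ((K + u : ℝ) : ℂ) ^ w) = (fun y : ℝ => ((K:ℂ) + (y:ℝ)) ^ w) := by
    funext u; push_cast; ring_nf
  rw [hfeq, show (((K + t : ℝ)) : ℂ) = ((K:ℂ) + (t:ℝ)) by push_cast; ring]
  simpa using h2

lemma zA_bound (s : ℂ) (hs1 : s ≠ 1) (hre : -2 ≤ s.re) (k : ℕ) (hk : 1 ≤ k) :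
    ‖zA s k‖ ≤ ‖s‖ * ‖s+1‖ * (k:ℝ) ^ (-(s.re+2)) / 2 := by
  have hK : (1:ℝ) ≤ (k:ℝ) := by exact_mod_cast hk
  have hK0 : 0 < (k:ℝ) := by linarith
  have hsub : (1:ℂ) - s ≠ 0 := sub_ne_zero.2 (Ne.symm hs1)
  set M : ℝ := ‖s‖ * ‖s+1‖ * (k:ℝ) ^ (-(s.re+2)) with hM
  -- derivative of h
  have c1 : ∀ t ∈ Set.Icc (0:ℝ) 1, HasDerivAt
      (fun t : ℝ => (((k:ℂ)^(-s) + (((k:ℝ) + t : ℝ):ℂ)^(-s)) * (t:ℂ)) / 2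
        - (((((k:ℝ) + t : ℝ):ℂ)^(1-s) - (k:ℂ)^(1-s)) / (1-s)))
      (((k:ℂ)^(-s) - (((k:ℝ) + t : ℝ):ℂ)^(-s))/2 + (t:ℂ) * (-s) * (((k:ℝ) + t : ℝ):ℂ)^(-s-1)/2)
      t := by
    intro t ht
    have hg := dcpow (k:ℝ) hK0 (-s) t ht.1
    have hgF := dcpow (k:ℝ) hK0 (1-s) t ht.1
    have e1 : (1:ℂ) - s - 1 = -s := by ring
    rw [e1] at hgF
    have hid : HasDerivAt (fun u : ℝ => ((u:ℝ):ℂ)) 1 t := by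
      simpa using (hasDerivAt_id t).ofReal_comp
    have hd := (((hasDerivAt_const t ((k:ℂ)^(-s))).add hg).mul hid).div_const 2 |>.sub
      ((hgF.sub_const ((k:ℂ)^(1-s))).div_const (1-s))
    convert hd using 1
    · rfl
    · rfl
    simp only [Pi.add_apply]
    field_simp
    ring
  -- derivative of h1f
  have c2 : ∀ t ∈ Set.Icc (0:ℝ) 1, HasDerivAt
      (fun t : ℝ => ((k:ℂ)^(-s) - (((k:ℝ) + t : ℝ):ℂ)^(-s))/2
        + (t:ℂ) * (-s) * (((k:ℝ) + t : ℝ):ℂ)^(-s-1)/2)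
      ((t:ℂ) * (s*(s+1)) * (((k:ℝ) + t : ℝ):ℂ)^(-s-2)/2) t := by
    intro t ht
    have hg := dcpow (k:ℝ) hK0 (-s) t ht.1
    have hg2 := dcpow (k:ℝ) hK0 (-s-1) t ht.1
    have e1 : -s - 1 - 1 = -s-2 := by ring
    rw [e1] at hg2
    have hid : HasDerivAt (fun u : ℝ => ((u:ℝ):ℂ)) 1 t := by
      simpa using (hasDerivAt_id t).ofReal_comp
    have hd := (((hasDerivAt_const t ((k:ℂ)^(-s))).sub hg).div_const 2).add
      (((hid.mul_const (-s)).mul hg2).div_const 2)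
    convert hd using 1
    · rfl
    · rfl
    ring
  -- bound on second derivative
  have c3 : ∀ t ∈ Set.Icc (0:ℝ) 1,
      ‖(t:ℂ) * (s*(s+1)) * (((k:ℝ) + t : ℝ):ℂ)^(-s-2)/2‖ ≤ M / 2 := by
    intro t ht
    have hpos : (0:ℝ) < (k:ℝ) + t := by linarith [ht.1]
    have hnorm : ‖(((k:ℝ) + t : ℝ):ℂ) ^ (-s-2)‖ = ((k:ℝ) + t) ^ (-(s.re+2)) := by
      rw [Complex.norm_cpow_eq_rpow_re_of_pos hpos]
      congr 1
      simp [Complex.sub_re, Complex.neg_re]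
      ring
    have hmono : ((k:ℝ) + t) ^ (-(s.re+2)) ≤ (k:ℝ) ^ (-(s.re+2)) :=
      Real.rpow_le_rpow_of_nonpos hK0 (by linarith [ht.1]) (by linarith)
    have heq : ‖(t:ℂ) * (s*(s+1)) * (((k:ℝ) + t : ℝ):ℂ)^(-s-2)/2‖
        = |t| * (‖s‖ * ‖s+1‖) * ‖(((k:ℝ) + t : ℝ):ℂ) ^ (-s-2)‖ / 2 := by
      simp only [norm_div, norm_mul, Complex.norm_real, Real.norm_eq_abs]
      norm_num
    rw [heq, hnorm, hM]
    have ht1 : |t| ≤ 1 := abs_le.2 ⟨by linarith [ht.1], ht.2⟩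
    have hnn : (0:ℝ) ≤ ‖s‖ * ‖s+1‖ := by positivity
    have h1 : |t| * (‖s‖ * ‖s+1‖) * (((k:ℝ) + t) ^ (-(s.re+2)))
        ≤ 1 * (‖s‖ * ‖s+1‖) * ((k:ℝ) ^ (-(s.re+2))) :=
      mul_le_mul (mul_le_mul ht1 le_rfl hnn (by norm_num)) hmono
        (Real.rpow_nonneg (le_of_lt hpos) _) (by positivity)
    calc |t| * (‖s‖ * ‖s+1‖) * ((k:ℝ) + t) ^ (-(s.re+2)) / 2
        ≤ 1 * (‖s‖ * ‖s+1‖) * (k:ℝ) ^ (-(s.re+2)) / 2 := by linarith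
      _ = ‖s‖ * ‖s+1‖ * (k:ℝ) ^ (-(s.re+2)) / 2 := by ring
  -- MVT for h1f
  have c4 : ∀ t ∈ Set.Icc (0:ℝ) 1,
      ‖((k:ℂ)^(-s) - (((k:ℝ) + t : ℝ):ℂ)^(-s))/2
        + (t:ℂ) * (-s) * (((k:ℝ) + t : ℝ):ℂ)^(-s-1)/2‖ ≤ M / 2 := by
    intro t ht
    have hmvt := Convex.norm_image_sub_le_of_norm_hasDerivWithin_le
      (fun x hx => (c2 x hx).hasDerivWithinAt) c3
      (convex_Icc 0 1) (Set.left_mem_Icc.2 zero_le_one) ht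
    have h0 : ((k:ℂ)^(-s) - (((k:ℝ) + 0 : ℝ):ℂ)^(-s))/2
        + ((0:ℝ):ℂ) * (-s) * (((k:ℝ) + 0 : ℝ):ℂ)^(-s-1)/2 = 0 := by
      norm_num
    rw [h0, sub_zero] at hmvt
    have hMnn : (0:ℝ) ≤ M := by rw [hM]; positivity
    calc _ ≤ M/2 * ‖t - 0‖ := hmvt
      _ ≤ M/2 * 1 := by
          apply mul_le_mul_of_nonneg_left _ (by linarith)
          rw [sub_zero, Real.norm_eq_abs]
          exact abs_le.2 ⟨by linarith [ht.1], ht.2⟩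
      _ = M/2 := mul_one _
  -- MVT for h
  have hfin : ‖(((k:ℂ)^(-s) + (((k:ℝ) + 1 : ℝ):ℂ)^(-s)) * ((1:ℝ):ℂ)) / 2
      - (((((k:ℝ) + 1 : ℝ):ℂ)^(1-s) - (k:ℂ)^(1-s)) / (1-s))‖ ≤ M / 2 := by
    have hmvt := Convex.norm_image_sub_le_of_norm_hasDerivWithin_le
      (fun x hx => (c1 x hx).hasDerivWithinAt) c4
      (convex_Icc 0 1) (Set.left_mem_Icc.2 zero_le_one) (Set.right_mem_Icc.2 zero_le_one)
    have h0 : (((k:ℂ)^(-s) + (((k:ℝ) + 0 : ℝ):ℂ)^(-s)) * ((0:ℝ):ℂ)) / 2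
        - (((((k:ℝ) + 0 : ℝ):ℂ)^(1-s) - (k:ℂ)^(1-s)) / (1-s)) = 0 := by
      norm_num
    rw [h0, sub_zero] at hmvt
    simpa using hmvt
  have hzA : zA s k = (((k:ℂ)^(-s) + (((k:ℝ) + 1 : ℝ):ℂ)^(-s)) * ((1:ℝ):ℂ)) / 2
      - (((((k:ℝ) + 1 : ℝ):ℂ)^(1-s) - (k:ℂ)^(1-s)) / (1-s)) := by
    rw [zA]
    push_cast
    ring
  rw [hzA]
  exact hfin


lemma rpow_summable {q : ℝ} (hq : 1 < q) : Summable (fun k : ℕ => ((k:ℝ)+1) ^ (-q)) := by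
  have h : Summable (fun n : ℕ => (n:ℝ) ^ (-q)) := Real.summable_nat_rpow.mpr (by linarith)
  have := (summable_nat_add_iff 1).mpr h
  simpa [Nat.cast_add] using this

lemma zA_summable (s : ℂ) (hs1 : s ≠ 1) (hre : -1 < s.re) :
    Summable (fun k : ℕ => zA s (k+1)) := by
  apply Summable.of_norm_bounded
    (g := fun k : ℕ => ‖s‖ * ‖s+1‖ * ((k:ℝ)+1) ^ (-(s.re+2)) / 2)
  · exact ((rpow_summable (by linarith)).mul_left (‖s‖ * ‖s+1‖)).div_const 2
  · intro k
    have := zA_bound s hs1 (by linarith) (k+1) (by omega)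
    simpa [Nat.cast_add] using this

lemma zS_tendsto (s : ℂ) (hs1 : s ≠ 1) (hre : -1 < s.re) :
    Tendsto (zS s) atTop (𝓝 (zG s)) := by
  have hs1' : s - 1 ≠ 0 := sub_ne_zero.2 hs1
  have hsub : (1:ℂ) - s ≠ 0 := sub_ne_zero.2 (Ne.symm hs1)
  have hsum : Tendsto (fun m => ∑ k ∈ Finset.range m, zA s (k+1)) atTop (𝓝 (zT s)) :=
    (zA_summable s hs1 hre).hasSum.tendsto_sum_nat
  have heq : ∀ n : ℕ, zS s (n+1) = (∑ k ∈ Finset.range n, zA s (k+1)) + 1/2 + 1/(s-1) := by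
    intro n
    rw [zS, key_id s n]
    push_cast
    have hinv : (1:ℂ)/(s-1) = -(1/(1-s)) := by
      field_simp
      ring
    rw [hinv]
    ring
  have h2 : Tendsto (fun n => zS s (n+1)) atTop (𝓝 (zG s)) := by
    rw [zG]
    exact Tendsto.congr (fun n => (heq n).symm)
      ((hsum.add_const (1/2)).add_const (1/(s-1)))
  exact (tendsto_add_atTop_iff_nat 1).mp h2

lemma cpow_tendsto_zero (w : ℂ) (hw : w.re < 0) :
    Tendsto (fun n : ℕ => (n:ℂ) ^ w) atTop (𝓝 0) := by
  have htg : Tendsto (fun n : ℕ => (n:ℝ) ^ w.re) atTop (𝓝 0) := by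
    have := (tendsto_rpow_neg_atTop (y := -w.re) (by linarith)).comp
      (tendsto_natCast_atTop_atTop (R := ℝ))
    simpa [Function.comp_def] using this
  apply squeeze_zero_norm' _ htg
  filter_upwards [eventually_ge_atTop 1] with n hn
  have hpos : (0:ℝ) < (n:ℝ) := by exact_mod_cast Nat.lt_of_lt_of_le Nat.zero_lt_one hn
  rw [show ((n:ℕ):ℂ) = (((n:ℝ)):ℂ) by push_cast; rfl,
    Complex.norm_cpow_eq_rpow_re_of_pos hpos]

lemma zG_eq_zeta (s : ℂ) (hre1 : 1 < s.re) : zG s = riemannZeta s := by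
  have hs1 : s ≠ 1 := by
    intro h; rw [h] at hre1; simp at hre1
  have hsummable : Summable (fun n : ℕ => (n:ℂ) ^ (-s)) := by
    have := Complex.summable_one_div_nat_cpow.mpr hre1
    simpa [cpow_neg, one_div] using this
  have hzeta : riemannZeta s = ∑' n : ℕ, (n:ℂ) ^ (-s) := by
    rw [zeta_eq_tsum_one_div_nat_cpow hre1]
    congr 1; funext n; rw [cpow_neg, one_div]
  have htend : Tendsto (fun m => ∑ k ∈ Finset.range m, (k:ℂ)^(-s)) atTop
      (𝓝 (riemannZeta s)) := by
    rw [hzeta]; exact hsummable.hasSum.tendsto_sum_nat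
  have hIcc : ∀ n : ℕ, (∑ k ∈ Finset.Icc 1 n, (k:ℂ)^(-s)) = ∑ k ∈ Finset.range (n+1), (k:ℂ)^(-s) := by
    intro n
    apply Finset.sum_subset
    · intro k hk; simp only [Finset.mem_Icc] at hk; simp only [Finset.mem_range]; omega
    · intro k hk hk2
      simp only [Finset.mem_range] at hk; simp only [Finset.mem_Icc] at hk2
      have : k = 0 := by omega
      subst this
      rw [Nat.cast_zero, Complex.zero_cpow (by
        intro h
        have : s = 0 := by simpa using (neg_eq_zero.mp h)
        rw [this] at hre1; norm_num at hre1)]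
  have hpart1 : Tendsto (fun n : ℕ => ∑ k ∈ Finset.Icc 1 n, (k:ℂ)^(-s)) atTop
      (𝓝 (riemannZeta s)) := by
    have := htend.comp (tendsto_add_atTop_nat 1)
    exact Tendsto.congr (fun n => (hIcc n).symm) this
  have hpart2 : Tendsto (fun n : ℕ => (n:ℂ)^(1-s)/(1-s)) atTop (𝓝 0) := by
    have := (cpow_tendsto_zero (1-s) (by simp [Complex.sub_re]; linarith)).div_const (1-s)
    simpa using this
  have hpart3 : Tendsto (fun n : ℕ => (n:ℂ)^(-s)/2) atTop (𝓝 0) := by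
    have := (cpow_tendsto_zero (-s) (by simp [Complex.neg_re]; linarith)).div_const 2
    simpa using this
  have h2 : Tendsto (zS s) atTop (𝓝 (riemannZeta s)) := by
    have := (hpart1.sub hpart2).sub hpart3
    rw [sub_zero, sub_zero] at this
    exact this
  exact tendsto_nhds_unique (zS_tendsto s hs1 (by linarith)) h2


lemma zG_eq_zeta_strip (α : ℝ) (h0 : 0 < α) (h1 : α < 1) :
    zG ((α - 1 : ℝ):ℂ) = riemannZeta ((α - 1 : ℝ):ℂ) := by
  set β : ℂ := ((α - 1 : ℝ):ℂ) with hβ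
  set R : ℝ := (3 - α)/2 with hR
  set c : ℂ := ((1/2 : ℝ):ℂ) with hc
  set B : Set ℂ := Metric.ball c R with hB
  set B' : Set ℂ := B \ {1} with hB'
  set q : ℝ := α/2 + 1 with hq
  have hq1 : 1 < q := by rw [hq]; linarith
  -- uniform bound on B'
  have hbound : ∀ (k : ℕ), ∀ s ∈ B', ‖zA s (k+1)‖ ≤ 3 * ((k:ℝ)+1) ^ (-q) := by
    intro k s hs
    obtain ⟨hsB, hs1⟩ := hs
    have hs1 : s ≠ 1 := hs1
    have hdist : ‖s - c‖ < R := by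
      rw [hB] at hsB; rwa [Metric.mem_ball, Complex.dist_eq] at hsB
    have hre_low : (α-2)/2 < s.re := by
      have h1 : |(s - c).re| ≤ ‖s - c‖ := Complex.abs_re_le_norm (s - c)
      have h2 : (s - c).re = s.re - 1/2 := by
        rw [Complex.sub_re, hc, Complex.ofReal_re]
      rw [h2] at h1
      have := neg_abs_le (s.re - 1/2)
      rw [hR] at hdist
      linarith [abs_le.mp (le_of_lt (lt_of_le_of_lt h1 hdist)) |>.1]
    have hs_norm : ‖s‖ ≤ 2 := by
      have : ‖s‖ ≤ ‖s - c‖ + ‖c‖ := by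
        calc ‖s‖ = ‖(s - c) + c‖ := by ring_nf
          _ ≤ ‖s - c‖ + ‖c‖ := norm_add_le _ _
      have hcnorm : ‖c‖ = 1/2 := by
        rw [hc, Complex.norm_real, Real.norm_eq_abs]; norm_num
      rw [hR] at hdist; rw [hcnorm] at this; linarith
    have hs1_norm : ‖s + 1‖ ≤ 3 := by
      have : ‖s + 1‖ ≤ ‖s - c‖ + ‖c + 1‖ := by
        calc ‖s + 1‖ = ‖(s - c) + (c + 1)‖ := by ring_nf
          _ ≤ ‖s - c‖ + ‖c + 1‖ := norm_add_le _ _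
      have hcnorm : ‖c + 1‖ = 3/2 := by
        rw [hc, show ((1/2:ℝ):ℂ) + 1 = ((3/2:ℝ):ℂ) by push_cast; ring,
          Complex.norm_real, Real.norm_eq_abs]
        norm_num
      rw [hR] at hdist; rw [hcnorm] at this; linarith
    have hk0 : (0:ℝ) ≤ (k:ℝ) := Nat.cast_nonneg k
    have hk1 : (1:ℝ) ≤ (k:ℝ)+1 := by linarith
    have hb := zA_bound s hs1 (by linarith) (k+1) (by omega)
    have hcast : (((k+1:ℕ)):ℝ) = (k:ℝ)+1 := by push_cast; ring
    rw [hcast] at hb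
    have hexp : ((k:ℝ)+1) ^ (-(s.re+2)) ≤ ((k:ℝ)+1) ^ (-q) := by
      apply Real.rpow_le_rpow_of_exponent_le hk1
      rw [hq]; linarith
    have hp1 : (0:ℝ) ≤ ((k:ℝ)+1) ^ (-(s.re+2)) := Real.rpow_nonneg (by linarith) _
    have hmid : ‖s‖ * ‖s+1‖ * ((k:ℝ)+1) ^ (-(s.re+2)) ≤ 2 * 3 * ((k:ℝ)+1) ^ (-q) :=
      mul_le_mul (mul_le_mul hs_norm hs1_norm (norm_nonneg _) (by norm_num)) hexp hp1
        (by norm_num)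
    calc ‖zA s (k+1)‖ ≤ ‖s‖ * ‖s+1‖ * ((k:ℝ)+1) ^ (-(s.re+2)) / 2 := hb
      _ ≤ 2 * 3 * ((k:ℝ)+1) ^ (-q) / 2 := by linarith
      _ = 3 * ((k:ℝ)+1) ^ (-q) := by ring
  -- summable majorant & uniform convergence
  have hu : Summable (fun k : ℕ => 3 * ((k:ℝ)+1) ^ (-q)) := (rpow_summable hq1).mul_left 3
  have htu : TendstoUniformlyOn (fun (N:ℕ) (s:ℂ) => ∑ k ∈ Finset.range N, zA s (k+1)) zT
      atTop B' := tendstoUniformlyOn_tsum_nat hu fun k s hs => hbound k s hs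
  have hopen' : IsOpen B' := Metric.isOpen_ball.sdiff isClosed_singleton
  -- differentiability of partial sums
  have hne0 : ∀ k : ℕ, ((k:ℂ)+1) ≠ 0 := fun k => by
    have := Nat.cast_ne_zero (R := ℂ) |>.mpr (Nat.succ_ne_zero k)
    push_cast at this
    exact this
  have hpartial : ∀ N : ℕ, DifferentiableOn ℂ (fun s => ∑ k ∈ Finset.range N, zA s (k+1)) B' := by
    intro N
    apply DifferentiableOn.fun_sum
    intro k _
    have hc1 : ((k+1:ℕ):ℂ) ≠ 0 := Nat.cast_ne_zero.mpr (by omega)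
    have hc2 : (((k+1:ℕ):ℂ)+1) ≠ 0 := hne0 (k+1)
    have d1 : DifferentiableOn ℂ (fun s : ℂ => ((k+1:ℕ):ℂ) ^ (-s)) B' :=
      (differentiable_id.neg.const_cpow (Or.inl hc1)).differentiableOn
    have d2 : DifferentiableOn ℂ (fun s : ℂ => (((k+1:ℕ):ℂ)+1) ^ (-s)) B' :=
      (differentiable_id.neg.const_cpow (Or.inl hc2)).differentiableOn
    have d3 : DifferentiableOn ℂ (fun s : ℂ => (((k+1:ℕ):ℂ)+1) ^ (1-s)) B' :=
      (((differentiable_const (1:ℂ)).sub differentiable_id).const_cpow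
        (Or.inl hc2)).differentiableOn
    have d4 : DifferentiableOn ℂ (fun s : ℂ => ((k+1:ℕ):ℂ) ^ (1-s)) B' :=
      (((differentiable_const (1:ℂ)).sub differentiable_id).const_cpow
        (Or.inl hc1)).differentiableOn
    have d5 : DifferentiableOn ℂ (fun s : ℂ => (1:ℂ) - s) B' :=
      ((differentiable_const (1:ℂ)).sub differentiable_id).differentiableOn
    have hsne : ∀ s ∈ B', (1:ℂ) - s ≠ 0 := by
      intro s hs
      exact sub_ne_zero.2 (Ne.symm hs.2)
    exact ((d1.add d2).div_const 2).sub ((d3.sub d4).div d5 hsne)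
  have hdiffT : DifferentiableOn ℂ zT B' :=
    htu.tendstoLocallyUniformlyOn.differentiableOn (Filter.Eventually.of_forall hpartial) hopen'
  -- the two updated functions
  set W : ℂ → ℂ := Function.update (fun s : ℂ => (s-1) * (zT s + 1/2) + 1) 1 1 with hW
  set Z : ℂ → ℂ := Function.update (fun s : ℂ => (s-1) * riemannZeta s) 1 1 with hZ
  have h1B : (1:ℂ) ∈ B := by
    rw [hB, Metric.mem_ball, Complex.dist_eq, hc, hR]
    rw [show (1:ℂ) - ((1/2:ℝ):ℂ) = ((1/2:ℝ):ℂ) by push_cast; ring, Complex.norm_real, Real.norm_eq_abs]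
    rw [abs_of_pos (by norm_num)]
    linarith
  have hWd : ∀ z ∈ B', DifferentiableAt ℂ W z := by
    intro z hz
    have hz1 : z ≠ 1 := hz.2
    have hbase : DifferentiableAt ℂ (fun s : ℂ => (s-1) * (zT s + 1/2) + 1) z := by
      have hT : DifferentiableAt ℂ zT z :=
        (hdiffT z hz).differentiableAt (hopen'.mem_nhds hz)
      exact (((differentiable_id.sub_const 1) z).mul (hT.add_const (1/2))).add_const 1
    apply hbase.congr_of_eventuallyEq
    filter_upwards [isOpen_compl_singleton.mem_nhds hz1] with x hx
    exact Function.update_of_ne hx _ _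
  have hZd : ∀ z : ℂ, z ≠ 1 → DifferentiableAt ℂ Z z := by
    intro z hz1
    have hbase : DifferentiableAt ℂ (fun s : ℂ => (s-1) * riemannZeta s) z :=
      ((differentiable_id.sub_const 1) z).mul (differentiableAt_riemannZeta hz1)
    apply hbase.congr_of_eventuallyEq
    filter_upwards [isOpen_compl_singleton.mem_nhds hz1] with x hx
    exact Function.update_of_ne hx _ _
  -- boundedness of zT on B'
  set C : ℝ := ∑' k : ℕ, 3 * ((k:ℝ)+1) ^ (-q) with hC
  have hTb : ∀ s ∈ B', ‖zT s‖ ≤ C :=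
    fun s hs => tsum_of_norm_bounded hu.hasSum (fun k => hbound k s hs)
  -- differentiability of W on B
  have hWdiff : DifferentiableOn ℂ W B := by
    intro s hs
    rcases eq_or_ne s 1 with rfl | hs1
    · -- removable singularity at 1
      have hpunct : ∀ᶠ z in 𝓝[≠] (1:ℂ), DifferentiableAt ℂ W z := by
        have hBmem : B ∈ 𝓝 (1:ℂ) := Metric.isOpen_ball.mem_nhds h1B
        filter_upwards [mem_nhdsWithin_of_mem_nhds hBmem, self_mem_nhdsWithin] with z hzB hz1
        exact hWd z ⟨hzB, hz1⟩
      have hcont : ContinuousAt W 1 := by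
        rw [hW]
        rw [continuousAt_update_same]
        have hten : Tendsto (fun s : ℂ => (s-1) * (zT s + 1/2)) (𝓝[≠] (1:ℂ)) (𝓝 0) := by
          have htg : Tendsto (fun s : ℂ => ‖s - 1‖ * (C + 1/2)) (𝓝[≠] (1:ℂ)) (𝓝 0) := by
            have h1 : Tendsto (fun s : ℂ => s - 1) (𝓝 (1:ℂ)) (𝓝 0) := by
              simpa using (continuous_sub_right (1:ℂ)).tendsto 1
            have h2 : Tendsto (fun s : ℂ => ‖s - 1‖) (𝓝 (1:ℂ)) (𝓝 0) := by
              have h1n := Filter.Tendsto.norm h1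
              simpa using h1n
            have h3 : Tendsto (fun s : ℂ => ‖s - 1‖) (𝓝[≠] (1:ℂ)) (𝓝 0) :=
              h2.mono_left nhdsWithin_le_nhds
            have h4 := h3.mul_const (C + 1/2)
            simpa using h4
          apply squeeze_zero_norm' _ htg
          have hBmem : B ∈ 𝓝 (1:ℂ) := Metric.isOpen_ball.mem_nhds h1B
          filter_upwards [mem_nhdsWithin_of_mem_nhds hBmem, self_mem_nhdsWithin] with z hzB hz1
          have hzB' : z ∈ B' := ⟨hzB, hz1⟩
          rw [norm_mul]
          apply mul_le_mul_of_nonneg_left _ (norm_nonneg _)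
          calc ‖zT z + 1/2‖ ≤ ‖zT z‖ + ‖(1/2 : ℂ)‖ := norm_add_le _ _
            _ ≤ C + 1/2 := by
                have := hTb z hzB'
                have h12 : ‖(1/2 : ℂ)‖ = 1/2 := by norm_num
                linarith [hTb z hzB', le_of_eq h12]
        have := hten.add_const (1:ℂ)
        simpa using this
      exact (analyticAt_of_differentiable_on_punctured_nhds_of_continuousAt hpunct
        hcont).differentiableAt.differentiableWithinAt
    · exact (hWd s ⟨hs, hs1⟩).differentiableWithinAt
  -- differentiability of Z on B
  have hZdiff : DifferentiableOn ℂ Z B := by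
    intro s _
    rcases eq_or_ne s 1 with rfl | hs1
    · have hpunct : ∀ᶠ z in 𝓝[≠] (1:ℂ), DifferentiableAt ℂ Z z := by
        filter_upwards [self_mem_nhdsWithin] with z hz1
        exact hZd z hz1
      have hcont : ContinuousAt Z 1 := by
        rw [hZ, continuousAt_update_same]
        exact riemannZeta_residue_one
      exact (analyticAt_of_differentiable_on_punctured_nhds_of_continuousAt hpunct
        hcont).differentiableAt.differentiableWithinAt
    · exact (hZd s hs1).differentiableWithinAt
  -- the two agree near p = 5/4
  set p : ℂ := ((5/4 : ℝ):ℂ) with hp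
  have hpB : p ∈ B := by
    rw [hB, Metric.mem_ball, Complex.dist_eq, hp, hc, hR]
    rw [show ((5/4:ℝ):ℂ) - ((1/2:ℝ):ℂ) = ((3/4:ℝ):ℂ) by push_cast; ring, Complex.norm_real, Real.norm_eq_abs,
      abs_of_pos (by norm_num)]
    linarith
  have heq_near : W =ᶠ[𝓝 p] Z := by
    have hVopen : IsOpen {s : ℂ | 1 < s.re} := isOpen_lt continuous_const Complex.continuous_re
    have hpV : p ∈ {s : ℂ | 1 < s.re} := by
      rw [hp]; simp only [Set.mem_setOf_eq, Complex.ofReal_re]; norm_num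
    filter_upwards [hVopen.mem_nhds hpV] with s hs
    have hsre : 1 < s.re := hs
    have hs1 : s ≠ 1 := by
      intro h; rw [h] at hsre; simp at hsre
    have hz : riemannZeta s = zT s + 1/2 + 1/(s-1) := by
      rw [← zG_eq_zeta s hsre, zG]
    rw [hW, hZ, Function.update_of_ne hs1, Function.update_of_ne hs1, hz]
    have hs1' : s - 1 ≠ 0 := sub_ne_zero.2 hs1
    field_simp
  -- identity theorem
  have hEq : Set.EqOn W Z B :=
    (hWdiff.analyticOnNhd Metric.isOpen_ball).eqOn_of_preconnected_of_eventuallyEq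
      (hZdiff.analyticOnNhd Metric.isOpen_ball) (convex_ball c R).isPreconnected hpB heq_near
  -- conclude at β
  have hβB : β ∈ B := by
    rw [hB, Metric.mem_ball, Complex.dist_eq, hβ, hc, hR]
    rw [show ((α-1:ℝ):ℂ) - ((1/2:ℝ):ℂ) = ((α - 3/2:ℝ):ℂ) by push_cast; ring, Complex.norm_real, Real.norm_eq_abs,
      abs_of_neg (by linarith)]
    linarith
  have hβ1 : β ≠ 1 := by
    intro h
    have : ((α - 1:ℝ):ℂ).re = (1:ℂ).re := by rw [← hβ, h]
    rw [Complex.ofReal_re, Complex.one_re] at this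
    linarith
  have hβ1' : β - 1 ≠ 0 := sub_ne_zero.2 hβ1
  have := hEq hβB
  rw [hW, hZ, Function.update_of_ne hβ1, Function.update_of_ne hβ1] at this
  have hmul : (β-1) * riemannZeta β = (β-1) * (zT β + 1/2 + 1/(β-1)) := by
    rw [← this]
    field_simp
  have := mul_left_cancel₀ hβ1' hmul
  rw [zG]
  exact this.symm



theorem stmt_10 (α : ℝ) (h0 : 0 < α) (h1 : α < 1) :
    Filter.Tendsto
      (fun n : ℕ => (∑ k ∈ Finset.Icc 1 n, (k:ℝ) ^ (1 - α)) -
        (n:ℝ) ^ (2 - α) / (2 - α) - (n:ℝ) ^ (1 - α) / 2)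
      Filter.atTop (nhds ((riemannZeta (α - 1)).re)) := by
  set β : ℂ := ((α - 1 : ℝ):ℂ) with hβ
  have hβre : β.re = α - 1 := Complex.ofReal_re _
  have hβ1 : β ≠ 1 := by
    intro h
    have : β.re = (1:ℂ).re := by rw [h]
    rw [hβre, Complex.one_re] at this
    linarith
  have hzeta_arg : ((α:ℂ) - 1) = β := by rw [hβ]; push_cast; ring
  have hten : Tendsto (zS β) atTop (𝓝 (riemannZeta β)) := by
    rw [← zG_eq_zeta_strip α h0 h1]
    exact zS_tendsto β hβ1 (by rw [hβre]; linarith)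
  have hre_ten : Tendsto (fun n => (zS β n).re) atTop (𝓝 ((riemannZeta β).re)) :=
    (Complex.continuous_re.tendsto _).comp hten
  have hfun : ∀ n : ℕ, (zS β n).re =
      (∑ k ∈ Finset.Icc 1 n, (k:ℝ) ^ (1 - α)) -
        (n:ℝ) ^ (2 - α) / (2 - α) - (n:ℝ) ^ (1 - α) / 2 := by
    intro n
    have hterm : ∀ k : ℕ, ((k:ℕ):ℂ) ^ (-β) = (((k:ℝ) ^ (1-α) : ℝ) : ℂ) := by
      intro k
      rw [show -β = ((1-α : ℝ):ℂ) by rw [hβ]; push_cast; ring,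
        show ((k:ℕ):ℂ) = (((k:ℝ)):ℂ) by push_cast; rfl,
        ← Complex.ofReal_cpow (Nat.cast_nonneg k)]
    have hterm2 : ((n:ℕ):ℂ) ^ ((1:ℂ)-β) = (((n:ℝ) ^ (2-α) : ℝ) : ℂ) := by
      rw [show (1:ℂ)-β = ((2-α : ℝ):ℂ) by rw [hβ]; push_cast; ring,
        show ((n:ℕ):ℂ) = (((n:ℝ)):ℂ) by push_cast; rfl,
        ← Complex.ofReal_cpow (Nat.cast_nonneg n)]
    have hzS : zS β n = ((((∑ k ∈ Finset.Icc 1 n, (k:ℝ) ^ (1 - α)) -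
        (n:ℝ) ^ (2 - α) / (2 - α) - (n:ℝ) ^ (1 - α) / 2) : ℝ) : ℂ) := by
      rw [zS]
      rw [show (1:ℂ)-β = ((2-α : ℝ):ℂ) from by rw [hβ]; push_cast; ring] at hterm2 ⊢
      simp only [hterm, hterm2]
      push_cast
      ring
    rw [hzS, Complex.ofReal_re]
  rw [show ((α:ℝ) - 1 : ℂ) = β from hzeta_arg]
  exact Tendsto.congr (fun n => hfun n) hre_ten
end

section
/- Let 0 < α < 1 and let y be twice continuously differentiable on [0,h₀] for some h₀ > 0. Then y(h) − y(0) − h^α Γ(2−α) D^α y(h) = O(h²) as h → 0⁺; that is, there exist constants C, δ > 0 with |y(h) − y(0) − h^α Γ(2−α) D^α y(h)| ≤ C h² for all 0 < h < δ. -/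
theorem stmt_16 (α : ℝ) (h0 : 0 < α) (h1 : α < 1) (h₀ : ℝ) (hh₀ : 0 < h₀)
    (y y' y'' : ℝ → ℝ)
    (hy' : ∀ t ∈ Set.Icc (0:ℝ) h₀, HasDerivAt y (y' t) t)
    (hy'' : ∀ t ∈ Set.Icc (0:ℝ) h₀, HasDerivAt y' (y'' t) t)
    (hcont : ContinuousOn y'' (Set.Icc 0 h₀)) :
    ∃ C δ : ℝ, 0 < C ∧ 0 < δ ∧ ∀ h : ℝ, 0 < h → h < δ →
      |y h - y 0 - h ^ α * Real.Gamma (2 - α) *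
          ((1 / Real.Gamma (1 - α)) * ∫ ξ in (0:ℝ)..h, y' ξ * (h - ξ) ^ (-α))|
        ≤ C * h ^ 2 := by
  have h1α : (0:ℝ) < 1 - α := by linarith
  obtain ⟨M₀, hM₀⟩ := (isCompact_Icc : IsCompact (Set.Icc (0:ℝ) h₀)).exists_bound_of_continuousOn hcont
  set M := max M₀ 0 with hM
  have hMnn : 0 ≤ M := le_max_right _ _
  have hbound : ∀ t ∈ Set.Icc (0:ℝ) h₀, |y'' t| ≤ M := fun t ht => (hM₀ t ht).trans (le_max_left _ _)
  have hΓ : Real.Gamma (2 - α) = (1 - α) * Real.Gamma (1 - α) := by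
    have h2 : (2:ℝ) - α = (1 - α) + 1 := by ring
    rw [h2, Real.Gamma_add_one (ne_of_gt h1α)]
  have hΓpos : 0 < Real.Gamma (1 - α) := Real.Gamma_pos_of_pos h1α
  have hy'cont : ContinuousOn y' (Set.Icc (0:ℝ) h₀) := fun t ht =>
    (hy'' t ht).continuousAt.continuousWithinAt
  have hy'lip : ∀ t ∈ Set.Icc (0:ℝ) h₀, |y' t - y' 0| ≤ M * t := by
    intro t ht
    have := (convex_Icc (0:ℝ) h₀).norm_image_sub_le_of_norm_hasDerivWithin_le
      (fun x hx => (hy'' x hx).hasDerivWithinAt) (fun x hx => hbound x hx)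
      (Set.left_mem_Icc.2 hh₀.le) ht
    simpa [Real.norm_eq_abs, abs_of_nonneg ht.1] using this
  refine ⟨2 * M + 1, h₀, by positivity, hh₀, fun h hh hhδ => ?_⟩
  have hIcc : Set.Icc (0:ℝ) h ⊆ Set.Icc (0:ℝ) h₀ := Set.Icc_subset_Icc le_rfl hhδ.le
  have huIcc : Set.uIcc (0:ℝ) h = Set.Icc (0:ℝ) h := Set.uIcc_of_le hh.le
  -- Taylor part
  have hTaylor : |y h - y 0 - y' 0 * h| ≤ M * h * h := by
    have key := (convex_Icc (0:ℝ) h).norm_image_sub_le_of_norm_hasDerivWithin_le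
      (f := fun t => y t - y' 0 * t) (f' := fun t => y' t - y' 0)
      (fun x hx => by
        have : HasDerivAt (fun t => y t - y' 0 * t) (y' x - y' 0) x := by
          exact ((hy' x (hIcc hx)).sub ((hasDerivAt_id x).const_mul (y' 0))).congr_deriv (by simp)
        exact this.hasDerivWithinAt)
      (fun x hx => by
        have hx' := hIcc hx
        have h1' := hy'lip x hx'
        have h2' : M * x ≤ M * h := mul_le_mul_of_nonneg_left hx.2 hMnn
        calc ‖y' x - y' 0‖ = |y' x - y' 0| := rfl
          _ ≤ M * x := h1'
          _ ≤ M * h := h2')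
      (Set.left_mem_Icc.2 hh.le) (Set.right_mem_Icc.2 hh.le)
    simp only [Real.norm_eq_abs, mul_zero, sub_zero, sub_sub_sub_cancel_right,
      abs_of_nonneg hh.le] at key
    calc |y h - y 0 - y' 0 * h| = |(y h - y' 0 * h) - (y 0 - y' 0 * 0)| := by ring_nf
      _ ≤ M * h * |h - 0| := by
          have := (convex_Icc (0:ℝ) h).norm_image_sub_le_of_norm_hasDerivWithin_le
            (f := fun t => y t - y' 0 * t) (f' := fun t => y' t - y' 0)
            (fun x hx => by
              have : HasDerivAt (fun t => y t - y' 0 * t) (y' x - y' 0) x := by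
                exact ((hy' x (hIcc hx)).sub ((hasDerivAt_id x).const_mul (y' 0))).congr_deriv (by simp)
              exact this.hasDerivWithinAt)
            (fun x hx => by
              have h1' := hy'lip x (hIcc hx)
              have h2' : M * x ≤ M * h := mul_le_mul_of_nonneg_left hx.2 hMnn
              calc ‖y' x - y' 0‖ = |y' x - y' 0| := rfl
                _ ≤ M * x := h1'
                _ ≤ M * h := h2')
            (Set.left_mem_Icc.2 hh.le) (Set.right_mem_Icc.2 hh.le)
          simpa [Real.norm_eq_abs] using this
      _ = M * h * h := by rw [sub_zero, abs_of_nonneg hh.le]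
  -- integrability
  have hint1 : IntervalIntegrable (fun ξ : ℝ => (h - ξ) ^ (-α)) MeasureTheory.volume 0 h := by
    have base : IntervalIntegrable (fun x : ℝ => x ^ (-α)) MeasureTheory.volume 0 h :=
      intervalIntegral.intervalIntegrable_rpow' (by linarith)
    simpa using (base.comp_sub_left h).symm
  have hrpow_nonneg : ∀ t ∈ Set.Ioc (0:ℝ) h, (0:ℝ) ≤ (h - t) ^ (-α) := fun t ht =>
    Real.rpow_nonneg (by linarith [ht.2]) _
  -- value of the kernel integral
  have hK : (∫ ξ in (0:ℝ)..h, (h - ξ) ^ (-α)) = h ^ (1 - α) / (1 - α) := by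
    have := intervalIntegral.integral_comp_sub_left (a := (0:ℝ)) (b := h)
      (fun x : ℝ => x ^ (-α)) h
    rw [this]
    simp only [sub_self, sub_zero]
    rw [integral_rpow (Or.inl (by linarith))]
    rw [Real.zero_rpow (by linarith : -α + 1 ≠ 0)]
    ring_nf
  have hint2 : IntervalIntegrable (fun ξ : ℝ => (y' ξ - y' 0) * (h - ξ) ^ (-α))
      MeasureTheory.volume 0 h := by
    apply hint1.continuousOn_mul
    rw [huIcc]
    exact (hy'cont.mono hIcc).sub continuousOn_const
  -- split integral
  have hsplit : (∫ ξ in (0:ℝ)..h, y' ξ * (h - ξ) ^ (-α))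
      = y' 0 * (h ^ (1 - α) / (1 - α)) + ∫ ξ in (0:ℝ)..h, (y' ξ - y' 0) * (h - ξ) ^ (-α) := by
    have heq : ∀ ξ : ℝ, y' ξ * (h - ξ) ^ (-α)
        = y' 0 * (h - ξ) ^ (-α) + (y' ξ - y' 0) * (h - ξ) ^ (-α) := fun ξ => by ring
    rw [intervalIntegral.integral_congr (g := fun ξ => y' 0 * (h - ξ) ^ (-α)
      + (y' ξ - y' 0) * (h - ξ) ^ (-α)) (fun ξ _ => heq ξ)]
    rw [intervalIntegral.integral_add (hint1.const_mul _) hint2,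
      intervalIntegral.integral_const_mul, hK]
  set E := ∫ ξ in (0:ℝ)..h, (y' ξ - y' 0) * (h - ξ) ^ (-α) with hE
  -- bound E
  have hEbound : |E| ≤ M * h * (h ^ (1 - α) / (1 - α)) := by
    have hb : IntervalIntegrable (fun ξ : ℝ => M * h * (h - ξ) ^ (-α))
        MeasureTheory.volume 0 h := hint1.const_mul _
    have key := intervalIntegral.norm_integral_le_abs_of_norm_le (μ := MeasureTheory.volume)
      (f := fun ξ : ℝ => (y' ξ - y' 0) * (h - ξ) ^ (-α))
      (g := fun ξ : ℝ => M * h * (h - ξ) ^ (-α)) ?_ hb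
    · have hgval : (∫ ξ in (0:ℝ)..h, M * h * (h - ξ) ^ (-α))
          = M * h * (h ^ (1 - α) / (1 - α)) := by
        rw [intervalIntegral.integral_const_mul, hK]
      rw [hgval] at key
      have hnn : 0 ≤ M * h * (h ^ (1 - α) / (1 - α)) := by positivity
      calc |E| = ‖E‖ := rfl
        _ ≤ |M * h * (h ^ (1 - α) / (1 - α))| := key
        _ = M * h * (h ^ (1 - α) / (1 - α)) := abs_of_nonneg hnn
    · rw [MeasureTheory.ae_restrict_iff' measurableSet_uIoc]
      filter_upwards with t ht
      rw [Set.uIoc_of_le hh.le] at ht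
      have ht' : t ∈ Set.Icc (0:ℝ) h₀ := ⟨ht.1.le, ht.2.trans hhδ.le⟩
      have hr : (0:ℝ) ≤ (h - t) ^ (-α) := hrpow_nonneg t ht
      calc ‖(y' t - y' 0) * (h - t) ^ (-α)‖ = |y' t - y' 0| * (h - t) ^ (-α) := by
            rw [Real.norm_eq_abs, abs_mul, abs_of_nonneg hr]
        _ ≤ (M * t) * (h - t) ^ (-α) := mul_le_mul_of_nonneg_right (hy'lip t ht') hr
        _ ≤ (M * h) * (h - t) ^ (-α) := by
            apply mul_le_mul_of_nonneg_right _ hr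
            exact mul_le_mul_of_nonneg_left ht.2 hMnn
  -- final computation
  have hhα : (0:ℝ) < h ^ α := Real.rpow_pos_of_pos hh α
  have hpow : h ^ α * h ^ (1 - α) = h := by
    rw [← Real.rpow_add hh]
    simp
  have hmain : y h - y 0 - h ^ α * Real.Gamma (2 - α) *
      ((1 / Real.Gamma (1 - α)) * ∫ ξ in (0:ℝ)..h, y' ξ * (h - ξ) ^ (-α))
      = (y h - y 0 - y' 0 * h) - h ^ α * (1 - α) * E := by
    rw [hsplit, hΓ]
    have key : ∀ a b : ℝ, a * b = h → a * ((1 - α) * Real.Gamma (1 - α)) *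
        ((1 / Real.Gamma (1 - α)) * (y' 0 * (b / (1 - α)) + E))
        = y' 0 * h + a * (1 - α) * E := by
      intro a b hab
      have hΓne : Real.Gamma (1 - α) ≠ 0 := hΓpos.ne'
      have h1αne : (1 - α) ≠ 0 := h1α.ne'
      rw [← hab]
      field_simp
    linarith [key _ _ hpow]
  rw [hmain]
  have hterm2 : |h ^ α * (1 - α) * E| ≤ M * h * h := by
    rw [abs_mul, abs_of_nonneg (by positivity : (0:ℝ) ≤ h ^ α * (1 - α))]
    calc h ^ α * (1 - α) * |E| ≤ h ^ α * (1 - α) * (M * h * (h ^ (1 - α) / (1 - α))) := by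
          apply mul_le_mul_of_nonneg_left hEbound (by positivity)
      _ = M * h * h := by
          have key2 : ∀ a b : ℝ, a * b = h →
              a * (1 - α) * (M * h * (b / (1 - α))) = M * h * h := by
            intro a b hab
            have h1αne : (1 - α) ≠ 0 := h1α.ne'
            rw [← hab]
            field_simp
          exact key2 _ _ hpow
  calc |(y h - y 0 - y' 0 * h) - h ^ α * (1 - α) * E|
      ≤ |y h - y 0 - y' 0 * h| + |h ^ α * (1 - α) * E| := abs_sub _ _
    _ ≤ M * h * h + M * h * h := add_le_add hTaylor hterm2
    _ ≤ (2 * M + 1) * h ^ 2 := by nlinarith [sq_nonneg h]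
end
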